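/- Let u ∈ L²(T) be real-valued. Then for every f ∈ H¹₊ and every κ ≥ 1: ‖Π_n(u·Π_n f)‖_{L²} ≤ √3 κ^{-1/2} ‖u‖_{L²} ‖(-i∂_x + κ)f‖_{L²}, uniformly in 1 ≤ n ≤ ∞. Consequently, the operator Π_n u Π_n is infinitesimally bounded with respect to -i∂_x on L²₊: for every ε > 0 there exists C(ε) such that ‖Π_n u Π_n f‖_{L²} ≤ ε‖∂_x f‖_{L²} + C(ε)‖f‖_{L²} for all f ∈ H¹₊. -/

import Mathlib

open scoped ComplexConjugate

noncomputable section

/-- The squared-summed `ℓ²` norm of a sequence of Fourier coefficients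
(`= L²` norm of the corresponding function on the torus, by Plancherel). -/
def l2norm {ι : Type*} (a : ι → ℂ) : ℝ := Real.sqrt (∑' k, ‖a k‖ ^ 2)

/-- The Fourier truncation `Π_n` onto frequencies `0 ≤ k < n` (with `Π_∞ = Π`),
acting on Hardy-space Fourier coefficients. -/
def trunc (n : ℕ∞) (a : ℕ → ℂ) : ℕ → ℂ := fun k => if (k : ℕ∞) < n then a k else 0

/-- The free resolvent `R₀(κ) = (-i∂ₓ + κ)⁻¹` on the Hardy space, as the Fourier
multiplier with symbol `1/(k+κ)`. -/
def res (κ : ℝ) (a : ℕ → ℂ) : ℕ → ℂ := fun k => a k / ((k : ℂ) + κ)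

/-- Fourier coefficients of the product `u · b` of a general `L²(𝕋)` function `u`
(coefficients indexed by `ℤ`) with a Hardy-space function `b`. -/
def mulZ (u : ℤ → ℂ) (b : ℕ → ℂ) : ℤ → ℂ := fun k => ∑' l : ℕ, u (k - (l : ℤ)) * b l

/-- Fourier coefficients of the product `u · b` of two Hardy-space functions. -/
def mulH (u b : ℕ → ℂ) : ℕ → ℂ :=
  fun k => (Finset.range (k + 1)).sum fun l => u (k - l) * b l

/-- Nonnegative Fourier coefficients of the product `conj u · b` for Hardy-space
functions `u, b`: `(ū·b)^(k) = ∑_{l≥0} conj(û(l)) b̂(l+k)` for `k ≥ 0`. -/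
def mulConjH (u b : ℕ → ℂ) : ℕ → ℂ := fun k => ∑' l : ℕ, conj (u l) * b (l + k)

/-- The truncated Toeplitz part `Π_n(u · Π_n f)` of the (BO) Lax operator, on the Fourier side. -/
def toepBO (u : ℤ → ℂ) (n : ℕ∞) (f : ℕ → ℂ) : ℕ → ℂ :=
  trunc n fun k => mulZ u (trunc n f) (k : ℤ)

/-- `(L_n + κ)f` for the truncated (BO) Lax operator `L_n = -i∂ₓ - Π_n u Π_n`,
on the Fourier side (the Fourier multiplier of `-i∂ₓ` on the Hardy space is `k`). -/
def LplusBO (u : ℤ → ℂ) (n : ℕ∞) (κ : ℝ) (f : ℕ → ℂ) : ℕ → ℂ :=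
  fun k => ((k : ℂ) + κ) * f k - toepBO u n f k

/-- The weighted Sobolev norm `‖f‖_{H^s_κ}`, `‖f‖²_{H^s_κ} = ∑ₖ (|k|+κ)^{2s}|f̂(k)|²`,
for a Hardy-space function (where `|k| = k`). -/
def hnorm (s κ : ℝ) (f : ℕ → ℂ) : ℝ :=
  Real.sqrt (∑' k : ℕ, ((k : ℝ) + κ) ^ (2 * s) * ‖f k‖ ^ 2)

/-- Membership in `H¹₊ = H¹ ∩ L²₊`, on the Fourier side. -/
def memH1 (f : ℕ → ℂ) : Prop := Summable fun k : ℕ => ((k : ℝ) + 1) ^ 2 * ‖f k‖ ^ 2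

/-!
On the Fourier side, write `g k = (k + κ) f k`. Truncations do not increase norms, so Young's
inequality gives `‖Π_n(u Π_n f)‖₂ ≤ ‖u‖₂ ‖f‖₁`, and Cauchy–Schwarz gives
`‖f‖₁² ≤ (∑ₗ (l + κ)⁻²) ‖g‖₂² ≤ (3/κ) ‖g‖₂²`. Working with `ℝ≥0∞`-valued sums keeps these steps
free of summability side conditions. For the second claim choose `κ` with `√(3/κ) ‖u‖₂ ≤ ε` and
use `‖g‖₂ ≤ ‖k f‖₂ + κ ‖f‖₂`.
-/

open MeasureTheory
open scoped ENNReal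

theorem ENNReal.tsum_mul_sq_le_sq_mul_sq {ι : Type*} (x y : ι → ℝ≥0∞) :
    (∑' i, x i * y i) ^ 2 ≤ (∑' i, x i ^ 2) * ∑' i, y i ^ 2 := by
  let : MeasurableSpace ι := ⊤
  have h := ENNReal.lintegral_mul_le_Lp_mul_Lq Measure.count Real.HolderConjugate.two_two
    measurable_from_top.aemeasurable measurable_from_top.aemeasurable (f := x) (g := y)
  simp only [lintegral_count, Pi.mul_apply, ENNReal.rpow_two] at h
  calc (∑' i, x i * y i) ^ 2
      ≤ ((∑' i, x i ^ 2) ^ (1 / 2 : ℝ) * (∑' i, y i ^ 2) ^ (1 / 2 : ℝ)) ^ 2 := by gcongr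
    _ = (∑' i, x i ^ 2) * ∑' i, y i ^ 2 := by
      rw [← ENNReal.mul_rpow_of_nonneg _ _ (by norm_num), ← ENNReal.rpow_two, one_div,
        ENNReal.rpow_inv_rpow two_ne_zero]

theorem ENNReal.sq_tsum_mul_le_tsum_mul_tsum_mul_sq {ι : Type*} (w x : ι → ℝ≥0∞) :
    (∑' i, w i * x i) ^ 2 ≤ (∑' i, w i) * ∑' i, w i * x i ^ 2 := by
  have hsq : ∀ i, (w i ^ (1 / 2 : ℝ)) ^ 2 = w i := fun i => by
    rw [← ENNReal.rpow_two, ← ENNReal.rpow_mul]; norm_num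
  calc (∑' i, w i * x i) ^ 2 = (∑' i, w i ^ (1 / 2 : ℝ) * (w i ^ (1 / 2 : ℝ) * x i)) ^ 2 := by
        simp_rw [← mul_assoc, ← sq, hsq]
    _ ≤ (∑' i, (w i ^ (1 / 2 : ℝ)) ^ 2) * ∑' i, (w i ^ (1 / 2 : ℝ) * x i) ^ 2 :=
        ENNReal.tsum_mul_sq_le_sq_mul_sq _ _
    _ = (∑' i, w i) * ∑' i, w i * x i ^ 2 := by simp_rw [mul_pow, hsq]

theorem ENNReal.tsum_int_conv_sq_le (a : ℤ → ℝ≥0∞) (b : ℕ → ℝ≥0∞) :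
    ∑' k : ℤ, (∑' l : ℕ, a (k - l) * b l) ^ 2 ≤ (∑' l, b l) ^ 2 * ∑' k, a k ^ 2 := by
  calc ∑' k : ℤ, (∑' l : ℕ, a (k - l) * b l) ^ 2
      ≤ ∑' k : ℤ, (∑' l, b l) * ∑' l : ℕ, b l * a (k - l) ^ 2 := by
        gcongr with k
        simpa only [mul_comm] using
          ENNReal.sq_tsum_mul_le_tsum_mul_tsum_mul_sq b fun l => a (k - l)
    _ = (∑' l, b l) * ∑' l : ℕ, b l * ∑' k : ℤ, a (k - l) ^ 2 := by
        rw [ENNReal.tsum_mul_left, ENNReal.tsum_comm]; simp_rw [ENNReal.tsum_mul_left]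
    _ = (∑' l, b l) ^ 2 * ∑' k, a k ^ 2 := by
        have hshift (l : ℕ) : ∑' k : ℤ, a (k - l) ^ 2 = ∑' k, a k ^ 2 :=
          (Equiv.subRight (l : ℤ)).tsum_eq (fun k => a k ^ 2)
        simp_rw [hshift, ENNReal.tsum_mul_right]
        ring

/-- Since `x⁻² + 2/(x + 1) ≤ 2/x` for `x ≥ 1`, the sum telescopes against `2/(N + κ)`. -/
theorem sum_range_inv_natCast_add_sq_add_le {κ : ℝ} (hκ : 1 ≤ κ) (N : ℕ) :
    ∑ l ∈ Finset.range N, ((l : ℝ) + κ)⁻¹ ^ 2 + 2 / (N + κ) ≤ 3 / κ := by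
  induction N with
  | zero =>
    simp only [Finset.range_zero, Finset.sum_empty, Nat.cast_zero, zero_add]
    gcongr
    norm_num
  | succ N ih =>
    have hx : 1 ≤ (N : ℝ) + κ := by linarith [N.cast_nonneg (α := ℝ)]
    have step : ((N : ℝ) + κ)⁻¹ ^ 2 + 2 / ((N + 1 : ℕ) + κ) ≤ 2 / (N + κ) := by
      push_cast
      rw [inv_pow, ← one_div, div_add_div _ _ (by positivity) (by positivity),
        div_le_div_iff₀ (by positivity) (by positivity)]
      nlinarith
    rw [Finset.sum_range_succ]
    linarith

theorem tsum_inv_enorm_natCast_add_sq_le {κ : ℝ} (hκ : 1 ≤ κ) :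
    ∑' l : ℕ, ‖(l : ℂ) + κ‖ₑ⁻¹ ^ 2 ≤ ENNReal.ofReal (3 / κ) := by
  have hpos (l : ℕ) : 0 < (l : ℝ) + κ := by positivity
  have hterm (l : ℕ) : ‖(l : ℂ) + κ‖ₑ⁻¹ ^ 2 = ENNReal.ofReal (((l : ℝ) + κ)⁻¹ ^ 2) := by
    rw [show (l : ℂ) + κ = ((l + κ : ℝ) : ℂ) by push_cast; ring, ← ofReal_norm,
      Complex.norm_real, Real.norm_of_nonneg (hpos l).le, ← ENNReal.ofReal_inv_of_pos (hpos l),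
      ENNReal.ofReal_pow (inv_nonneg.2 (hpos l).le)]
  refine ENNReal.tsum_le_of_sum_range_le fun N => ?_
  simp_rw [hterm, ← ENNReal.ofReal_sum_of_nonneg fun l _ => sq_nonneg _]
  refine ENNReal.ofReal_le_ofReal ?_
  linarith [sum_range_inv_natCast_add_sq_add_le hκ N, show 0 ≤ 2 / ((N : ℝ) + κ) by positivity]

section L2

variable {ι : Type*}

theorem memℓp_two_iff_summable_sq {E : Type*} [NormedAddCommGroup E] {a : ι → E} :
    Memℓp a 2 ↔ Summable fun k => ‖a k‖ ^ 2 := by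
  rw [memℓp_gen_iff (by norm_num)]
  norm_num

theorem l2norm_nonneg (a : ι → ℂ) : 0 ≤ l2norm a := Real.sqrt_nonneg _

theorem l2norm_eq_norm_lp {a : ι → ℂ} (ha : Memℓp a 2) :
    l2norm a = ‖(⟨a, ha⟩ : lp (fun _ : ι => ℂ) 2)‖ := by
  rw [lp.norm_eq_tsum_rpow (by norm_num), l2norm, Real.sqrt_eq_rpow]
  norm_num

theorem l2norm_add_le {a b : ι → ℂ} (ha : Memℓp a 2) (hb : Memℓp b 2) :
    l2norm (a + b) ≤ l2norm a + l2norm b := by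
  rw [l2norm_eq_norm_lp ha, l2norm_eq_norm_lp hb, l2norm_eq_norm_lp (ha.add hb)]
  exact norm_add_le (⟨a, ha⟩ : lp (fun _ : ι => ℂ) 2) ⟨b, hb⟩

theorem l2norm_smul (c : ℂ) (a : ι → ℂ) : l2norm (c • a) = ‖c‖ * l2norm a := by
  simp_rw [l2norm, Pi.smul_apply, smul_eq_mul, norm_mul, mul_pow, tsum_mul_left]
  rw [Real.sqrt_mul (sq_nonneg _), Real.sqrt_sq (norm_nonneg _)]

theorem l2norm_eq_sqrt_toReal (a : ι → ℂ) : l2norm a = √(∑' k, ‖a k‖ₑ ^ 2).toReal := by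
  rw [l2norm, ENNReal.tsum_toReal_eq fun k => ENNReal.pow_ne_top enorm_ne_top]
  simp_rw [ENNReal.toReal_pow, toReal_enorm]

theorem l2norm_le_sqrt_of_tsum_enorm_sq_le {a : ι → ℂ} {x : ℝ} (hx : 0 ≤ x)
    (h : ∑' k, ‖a k‖ₑ ^ 2 ≤ ENNReal.ofReal x) : l2norm a ≤ √x := by
  rw [l2norm_eq_sqrt_toReal]
  exact Real.sqrt_le_sqrt (ENNReal.toReal_le_of_le_ofReal hx h)

theorem tsum_enorm_sq_eq_ofReal_l2norm_sq {a : ι → ℂ} (ha : Memℓp a 2) :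
    ∑' k, ‖a k‖ₑ ^ 2 = ENNReal.ofReal (l2norm a ^ 2) := by
  rw [l2norm, Real.sq_sqrt (tsum_nonneg fun k => sq_nonneg _),
    ENNReal.ofReal_tsum_of_nonneg (fun k => sq_nonneg _) (memℓp_two_iff_summable_sq.1 ha)]
  simp_rw [ENNReal.ofReal_pow (norm_nonneg _), ofReal_norm]

end L2

theorem memH1.memℓp {f : ℕ → ℂ} (hf : memH1 f) : Memℓp f 2 :=
  memℓp_two_iff_summable_sq.2 <| hf.of_nonneg_of_le (fun k => sq_nonneg _) fun k =>
    le_mul_of_one_le_left (sq_nonneg _) (one_le_pow₀ (by linarith [k.cast_nonneg (α := ℝ)]))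

theorem memH1.memℓp_natCast_mul {f : ℕ → ℂ} (hf : memH1 f) :
    Memℓp (fun k : ℕ => (k : ℂ) * f k) 2 :=
  memℓp_two_iff_summable_sq.2 <| hf.of_nonneg_of_le (fun k => sq_nonneg _) fun k => by
    rw [norm_mul, mul_pow, Complex.norm_natCast]
    gcongr
    linarith

theorem natCast_add_mul_eq (κ : ℝ) (f : ℕ → ℂ) :
    (fun k : ℕ => ((k : ℂ) + κ) * f k) = (fun k : ℕ => (k : ℂ) * f k) + (κ : ℂ) • f := by
  ext k
  simp only [Pi.add_apply, Pi.smul_apply, smul_eq_mul]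
  ring

theorem memH1.memℓp_natCast_add_mul {f : ℕ → ℂ} (hf : memH1 f) (κ : ℝ) :
    Memℓp (fun k : ℕ => ((k : ℂ) + κ) * f k) 2 := by
  rw [natCast_add_mul_eq]
  exact hf.memℓp_natCast_mul.add (hf.memℓp.const_smul _)

theorem l2norm_natCast_add_mul_le {κ : ℝ} (hκ : 0 ≤ κ) {f : ℕ → ℂ} (hf : memH1 f) :
    l2norm (fun k : ℕ => ((k : ℂ) + κ) * f k) ≤
      l2norm (fun k : ℕ => (k : ℂ) * f k) + κ * l2norm f := by
  rw [natCast_add_mul_eq]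
  refine (l2norm_add_le hf.memℓp_natCast_mul (hf.memℓp.const_smul _)).trans_eq ?_
  rw [l2norm_smul, Complex.norm_real, Real.norm_of_nonneg hκ]

theorem enorm_trunc_le (n : ℕ∞) (a : ℕ → ℂ) (k : ℕ) : ‖trunc n a k‖ₑ ≤ ‖a k‖ₑ := by
  unfold trunc
  split_ifs <;> simp

theorem tsum_enorm_mulZ_sq_le (u : ℤ → ℂ) (b : ℕ → ℂ) :
    ∑' k, ‖mulZ u b k‖ₑ ^ 2 ≤ (∑' l, ‖b l‖ₑ) ^ 2 * ∑' k, ‖u k‖ₑ ^ 2 :=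
  calc ∑' k, ‖mulZ u b k‖ₑ ^ 2 ≤ ∑' k : ℤ, (∑' l : ℕ, ‖u (k - l)‖ₑ * ‖b l‖ₑ) ^ 2 := by
        gcongr with k
        exact enorm_tsum_le_tsum_enorm.trans_eq (by simp_rw [enorm_mul])
    _ ≤ _ := ENNReal.tsum_int_conv_sq_le _ _

theorem tsum_enorm_toepBO_sq_le (u : ℤ → ℂ) (n : ℕ∞) (f : ℕ → ℂ) :
    ∑' k, ‖toepBO u n f k‖ₑ ^ 2 ≤ (∑' l, ‖f l‖ₑ) ^ 2 * ∑' k, ‖u k‖ₑ ^ 2 :=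
  calc ∑' k, ‖toepBO u n f k‖ₑ ^ 2 ≤ ∑' k : ℕ, ‖mulZ u (trunc n f) k‖ₑ ^ 2 := by
        gcongr with k
        exact enorm_trunc_le _ _ _
    _ ≤ ∑' k : ℤ, ‖mulZ u (trunc n f) k‖ₑ ^ 2 :=
        ENNReal.tsum_comp_le_tsum_of_injective Nat.cast_injective
          fun k => ‖mulZ u (trunc n f) k‖ₑ ^ 2
    _ ≤ (∑' l, ‖trunc n f l‖ₑ) ^ 2 * ∑' k, ‖u k‖ₑ ^ 2 := tsum_enorm_mulZ_sq_le _ _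
    _ ≤ _ := by
        gcongr with l
        exact enorm_trunc_le _ _ _

theorem sq_tsum_enorm_le_three_div_mul {κ : ℝ} (hκ : 1 ≤ κ) (f : ℕ → ℂ) :
    (∑' l, ‖f l‖ₑ) ^ 2 ≤ ENNReal.ofReal (3 / κ) * ∑' l : ℕ, ‖((l : ℂ) + κ) * f l‖ₑ ^ 2 := by
  have hf (l : ℕ) : ‖f l‖ₑ = ‖(l : ℂ) + κ‖ₑ⁻¹ * ‖((l : ℂ) + κ) * f l‖ₑ := by
    have hne : (l : ℂ) + κ ≠ 0 := by
      rw [show (l : ℂ) + κ = ((l + κ : ℝ) : ℂ) by push_cast; ring]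
      exact Complex.ofReal_ne_zero.2 (by positivity)
    rw [enorm_mul, ← mul_assoc, ENNReal.inv_mul_cancel (enorm_ne_zero.2 hne) enorm_ne_top, one_mul]
  calc (∑' l, ‖f l‖ₑ) ^ 2 = (∑' l : ℕ, ‖(l : ℂ) + κ‖ₑ⁻¹ * ‖((l : ℂ) + κ) * f l‖ₑ) ^ 2 := by
        simp_rw [← hf]
    _ ≤ (∑' l : ℕ, ‖(l : ℂ) + κ‖ₑ⁻¹ ^ 2) * ∑' l : ℕ, ‖((l : ℂ) + κ) * f l‖ₑ ^ 2 :=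
        ENNReal.tsum_mul_sq_le_sq_mul_sq _ _
    _ ≤ _ := by
        gcongr
        exact tsum_inv_enorm_natCast_add_sq_le hκ

theorem l2norm_toepBO_le {u : ℤ → ℂ} (hu : Summable fun k : ℤ => ‖u k‖ ^ 2) (n : ℕ∞) {κ : ℝ}
    (hκ : 1 ≤ κ) {f : ℕ → ℂ} (hf : memH1 f) :
    l2norm (toepBO u n f) ≤ √(3 / κ) * l2norm u * l2norm (fun k : ℕ => ((k : ℂ) + κ) * f k) := by
  have h := (tsum_enorm_toepBO_sq_le u n f).trans
    (mul_le_mul_left (sq_tsum_enorm_le_three_div_mul hκ f) _)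
  rw [tsum_enorm_sq_eq_ofReal_l2norm_sq (hf.memℓp_natCast_add_mul κ),
    tsum_enorm_sq_eq_ofReal_l2norm_sq (memℓp_two_iff_summable_sq.2 hu),
    ← ENNReal.ofReal_mul (by positivity), ← ENNReal.ofReal_mul (by positivity)] at h
  refine (l2norm_le_sqrt_of_tsum_enorm_sq_le (by positivity) h).trans_eq ?_
  rw [Real.sqrt_mul (by positivity), Real.sqrt_mul (by positivity),
    Real.sqrt_sq (l2norm_nonneg _), Real.sqrt_sq (l2norm_nonneg _)]
  ring

theorem sqrt_three_div_mul_le {a ε κ : ℝ} (ha : 0 ≤ a) (hε : 0 < ε) (hκ : 0 < κ)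
    (h : 3 * a ^ 2 / ε ^ 2 ≤ κ) : √(3 / κ) * a ≤ ε := by
  rw [← Real.sqrt_sq ha, ← Real.sqrt_mul (by positivity), Real.sqrt_le_left hε.le]
  rw [div_le_iff₀ (by positivity)] at h
  rw [div_mul_eq_mul_div, div_le_iff₀ hκ]
  linarith

theorem stmt18_general (u : ℤ → ℂ) (hu : Summable fun k : ℤ => ‖u k‖ ^ 2) :
    (∀ n : ℕ∞, 1 ≤ n → ∀ κ : ℝ, 1 ≤ κ → ∀ f : ℕ → ℂ, memH1 f →
      l2norm (toepBO u n f) ≤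
        Real.sqrt 3 * κ ^ (-(1 : ℝ) / 2) * l2norm u *
          l2norm (fun k : ℕ => ((k : ℂ) + κ) * f k)) ∧
    ∀ ε > (0 : ℝ), ∃ C : ℝ, ∀ n : ℕ∞, 1 ≤ n → ∀ f : ℕ → ℂ, memH1 f →
      l2norm (toepBO u n f) ≤
        ε * l2norm (fun k : ℕ => (k : ℂ) * f k) + C * l2norm f := by
  refine ⟨fun n _ κ hκ f hf => ?_, fun ε hε => ?_⟩
  · have hκ0 : 0 ≤ κ := by linarith
    rw [neg_div, Real.rpow_neg hκ0, ← Real.sqrt_eq_rpow, ← div_eq_mul_inv,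
      ← Real.sqrt_div' _ hκ0]
    exact l2norm_toepBO_le hu n hκ hf
  · set κ := max 1 (3 * l2norm u ^ 2 / ε ^ 2)
    have hκ : 1 ≤ κ := le_max_left _ _
    have hsmall : √(3 / κ) * l2norm u ≤ ε :=
      sqrt_three_div_mul_le (l2norm_nonneg u) hε (by linarith) (le_max_right _ _)
    refine ⟨ε * κ, fun n _ f hf => ?_⟩
    calc l2norm (toepBO u n f)
        ≤ √(3 / κ) * l2norm u * l2norm (fun k : ℕ => ((k : ℂ) + κ) * f k) :=
          l2norm_toepBO_le hu n hκ hf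
      _ ≤ ε * (l2norm (fun k : ℕ => (k : ℂ) * f k) + κ * l2norm f) :=
          mul_le_mul hsmall (l2norm_natCast_add_mul_le (by linarith) hf) (l2norm_nonneg _) hε.le
      _ = ε * l2norm (fun k : ℕ => (k : ℂ) * f k) + ε * κ * l2norm f := by ring

theorem stmt18 (u : ℤ → ℂ) (hu : Summable fun k : ℤ => ‖u k‖ ^ 2)
    (hreal : ∀ k : ℤ, u (-k) = conj (u k)) :
    (∀ n : ℕ∞, 1 ≤ n → ∀ κ : ℝ, 1 ≤ κ → ∀ f : ℕ → ℂ, memH1 f →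
      l2norm (toepBO u n f) ≤
        Real.sqrt 3 * κ ^ (-(1 : ℝ) / 2) * l2norm u *
          l2norm (fun k : ℕ => ((k : ℂ) + κ) * f k)) ∧
    ∀ ε > (0 : ℝ), ∃ C : ℝ, ∀ n : ℕ∞, 1 ≤ n → ∀ f : ℕ → ℂ, memH1 f →
      l2norm (toepBO u n f) ≤
        ε * l2norm (fun k : ℕ => (k : ℂ) * f k) + C * l2norm f :=
  stmt18_general u hu
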